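/- With μ, i, the blocks B_1, …, B_i, the block sizes l_j, and the counting function c_n as in the context, assume moreover that ∑_j l_j < μ. Then there exists a polynomial P ∈ ℚ[X] of degree exactly μ − 1 such that c_n = P(n) for every natural number n ≥ 0. (This is the combinatorial content of Corollary 3.13 of the paper, showing the Hilbert function of each summand N^{(v̄,l̄)} agrees with a polynomial for all n, and of the degree count in Theorem 3.5.) -/

import Mathlib

/-!
Inclusion–exclusion over the set `T` of blocks on which `a` is forced to vanish gives
`c n = ∑_T (-1)^|T| · multichoose (r_T, n)` with `r_T = μ - |⋃_{j ∈ T} B_j|`. Since `∑ l_j < μ`,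
every `r_T` is positive, so `multichoose (r_T, n) = C(n + r_T - 1, r_T - 1)` is a polynomial in `n`
of degree `r_T - 1`. The term `T = ∅` has degree `μ - 1`, and every other term has smaller degree
because the blocks are nonempty.
-/

open Finset Polynomial

namespace Finset

variable {α ι : Type*} [DecidableEq ι]

theorem card_filter_forall_not_eq_sum_powerset (U : Finset α) (s : Finset ι)
    (p : ι → α → Prop) [∀ i, DecidablePred (p i)] :
    (#{a ∈ U | ∀ i ∈ s, ¬ p i a} : ℤ) =
      ∑ t ∈ s.powerset, (-1 : ℤ) ^ #t * #{a ∈ U | ∀ i ∈ t, p i a} := by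
  have indicator_eq (a : α) : (if ∀ i ∈ s, ¬ p i a then (1 : ℤ) else 0) =
      ∑ t ∈ s.powerset, (-1) ^ #t * if ∀ i ∈ t, p i a then 1 else 0 := by
    calc (if ∀ i ∈ s, ¬ p i a then (1 : ℤ) else 0)
        = ∏ i ∈ s, (1 - if p i a then 1 else 0) := by
          rw [← prod_boole]
          refine prod_congr rfl fun i _ => ?_
          split_ifs <;> simp
      _ = _ := by simp [prod_sub, prod_boole]
  simp only [natCast_card_filter, mul_sum]
  rw [sum_comm]
  exact sum_congr rfl fun a _ => indicator_eq a

theorem card_piAntidiag_eq_multichoose (s : Finset ι) (n : ℕ) :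
    #(piAntidiag s n) = (#s).multichoose n := by
  rw [← card_finsuppAntidiag_nat_eq_multichoose, finsuppAntidiag, card_map, card_attach]

end Finset

namespace Polynomial

variable {ι R : Type*} [Semiring R]

theorem degree_sum_eq_of_degree_lt {s : Finset ι} {i : ι} (hi : i ∈ s) (f : ι → R[X])
    (h : ∀ j ∈ s, j ≠ i → (f j).degree < (f i).degree) :
    (∑ j ∈ s, f j).degree = (f i).degree := by
  classical
  rw [← add_sum_erase s f hi]
  rcases (s.erase i).eq_empty_or_nonempty with hempty | ⟨j, hj⟩
  · simp [hempty]
  refine degree_add_eq_left_of_degree_lt ((degree_sum_le _ _).trans_lt ?_)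
  have hbot : ⊥ < (f i).degree := bot_le.trans_lt (h j (mem_of_mem_erase hj) (ne_of_mem_erase hj))
  exact (Finset.sup_lt_iff hbot).2 fun k hk => h k (mem_of_mem_erase hk) (ne_of_mem_erase hk)

end Polynomial

/-- `(X + 1) ⋯ (X + r - 1) / (r - 1)!`, which interpolates `r.multichoose` only when `r ≠ 0`. -/
noncomputable def multichoosePoly (r : ℕ) : ℚ[X] :=
  C ((r - 1).factorial : ℚ)⁻¹ * (ascPochhammer ℚ (r - 1)).comp (X + 1)

theorem degree_multichoosePoly (r : ℕ) : (multichoosePoly r).degree = (r - 1 : ℕ) := by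
  have hmonic : ((ascPochhammer ℚ (r - 1)).comp (X + 1)).Monic :=
    (monic_ascPochhammer ℚ _).comp_X_add_C 1
  rw [multichoosePoly, degree_C_mul (by positivity), degree_eq_natDegree hmonic.ne_zero,
    natDegree_comp, ascPochhammer_natDegree, ← C_1, natDegree_X_add_C, mul_one]

theorem eval_multichoosePoly {r : ℕ} (hr : r ≠ 0) (n : ℕ) :
    (multichoosePoly r).eval (n : ℚ) = r.multichoose n := by
  obtain ⟨k, rfl⟩ := Nat.exists_eq_add_one_of_ne_zero hr
  have key : (n + 1).ascFactorial k = k.factorial * (k + 1).multichoose n := by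
    rw [Nat.ascFactorial_eq_factorial_mul_choose, Nat.multichoose_eq, add_right_comm,
      Nat.add_sub_cancel, add_comm k n, Nat.choose_symm_add]
  rw [multichoosePoly, eval_mul, eval_C, eval_comp, eval_add, eval_X, eval_one, Nat.add_sub_cancel,
    ← Nat.cast_add_one, ascPochhammer_nat_eq_natCast_ascFactorial, key]
  push_cast
  field_simp

section Counting

variable {κ ι : Type*} [Fintype κ] [DecidableEq κ]

theorem natCard_sum_eq_and_eq_card_filter (P : (κ → ℕ) → Prop) [DecidablePred P] (n : ℕ) :
    Nat.card {a : κ → ℕ // ∑ k, a k = n ∧ P a} = #{a ∈ piAntidiag univ n | P a} := by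
  rw [← Nat.card_eq_finsetCard]
  exact Nat.card_congr (Equiv.subtypeEquivRight fun a => by simp)

theorem card_filter_piAntidiag_univ_forall_eq_zero (D : Finset κ) (n : ℕ) :
    #{a ∈ piAntidiag univ n | ∀ k ∈ D, a k = 0} = (#Dᶜ).multichoose n := by
  rw [← card_piAntidiag_eq_multichoose]
  congr 1
  ext a
  simp only [mem_filter, mem_piAntidiag, mem_univ, ne_eq, imp_true_iff, and_true, mem_compl]
  constructor
  · rintro ⟨rfl, hD⟩
    exact ⟨by rw [← sum_compl_add_sum D a, sum_eq_zero hD, add_zero],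
      fun k hk hkD => hk (hD k hkD)⟩
  · rintro ⟨rfl, hD⟩
    have hD' : ∀ k ∈ D, a k = 0 := fun k hkD => by_contra fun hk => hD k hk hkD
    exact ⟨by rw [← sum_compl_add_sum D a, sum_eq_zero hD', add_zero], hD'⟩

variable (B : ι → Finset κ)

theorem card_compl_biUnion_lt (hB : ∀ j, (B j).Nonempty) {T : Finset ι} (hT : T.Nonempty) :
    #(T.biUnion B)ᶜ < Fintype.card κ := by
  obtain ⟨j, hj⟩ := hT
  have : 0 < #(T.biUnion B) := card_pos.2 ((hB j).mono (subset_biUnion_of_mem B hj))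
  have := card_le_univ (T.biUnion B)
  rw [card_compl]
  omega

variable [Fintype ι]

theorem natCard_forall_exists_pos_eq_sum [DecidableEq ι] (n : ℕ) :
    (Nat.card {a : κ → ℕ // ∑ k, a k = n ∧ ∀ j, ∃ k ∈ B j, 0 < a k} : ℤ) =
      ∑ T ∈ univ.powerset, (-1 : ℤ) ^ #T * (#(T.biUnion B)ᶜ).multichoose n := by
  rw [natCard_sum_eq_and_eq_card_filter]
  convert card_filter_forall_not_eq_sum_powerset (piAntidiag univ n) univ
    (fun j a => ∀ k ∈ B j, a k = 0) using 1
  · congr 2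
    ext a
    simp [Nat.pos_iff_ne_zero]
  · refine sum_congr rfl fun T _ => ?_
    rw [← card_filter_piAntidiag_univ_forall_eq_zero]
    congr 3
    ext a
    simp only [mem_filter, mem_biUnion]
    grind

theorem card_compl_biUnion_pos (hsum : ∑ j, #(B j) < Fintype.card κ) (T : Finset ι) :
    0 < #(T.biUnion B)ᶜ := by
  have : #(T.biUnion B) < Fintype.card κ := calc
    #(T.biUnion B) ≤ ∑ j ∈ T, #(B j) := card_biUnion_le
    _ ≤ ∑ j, #(B j) := sum_le_sum_of_subset (subset_univ T)
    _ < Fintype.card κ := hsum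
  rw [card_compl]
  omega

noncomputable def hittingPoly : ℚ[X] :=
  ∑ T ∈ univ.powerset, (-1 : ℚ) ^ #T • multichoosePoly #(T.biUnion B)ᶜ

theorem eval_hittingPoly [DecidableEq ι] (hsum : ∑ j, #(B j) < Fintype.card κ) (n : ℕ) :
    (hittingPoly B).eval (n : ℚ) =
      Nat.card {a : κ → ℕ // ∑ k, a k = n ∧ ∀ j, ∃ k ∈ B j, 0 < a k} := by
  have hcount := congrArg (Int.cast : ℤ → ℚ) (natCard_forall_exists_pos_eq_sum B n)
  push_cast at hcount
  rw [hcount, hittingPoly, eval_finsetSum]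
  refine sum_congr rfl fun T _ => ?_
  rw [eval_smul, smul_eq_mul, eval_multichoosePoly (card_compl_biUnion_pos B hsum T).ne']

theorem degree_hittingPoly (hB : ∀ j, (B j).Nonempty) (hsum : ∑ j, #(B j) < Fintype.card κ) :
    (hittingPoly B).degree = (Fintype.card κ - 1 : ℕ) := by
  rw [hittingPoly, degree_sum_eq_of_degree_lt (empty_mem_powerset univ)]
  · simp [degree_multichoosePoly]
  · intro T _ hT
    refine (degree_smul_le _ _).trans_lt ?_
    simp only [card_empty, pow_zero, one_smul, degree_multichoosePoly, biUnion_empty, compl_empty,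
      card_univ]
    have hpos := card_compl_biUnion_pos B hsum T
    have hlt := card_compl_biUnion_lt B hB (nonempty_iff_ne_empty.2 hT)
    exact_mod_cast (show #(T.biUnion B)ᶜ - 1 < Fintype.card κ - 1 by omega)

end Counting

theorem stmt_7_general (μ : ℕ) (i : ℕ) (B : Fin i → Finset (Fin μ))
    (hB : ∀ j, (B j).Nonempty)
    (hsum : (∑ j, (B j).card) < μ)
    (c : ℕ → ℕ)
    (hc : ∀ n, c n =
      Nat.card {a : Fin μ → ℕ // (∑ k, a k) = n ∧ ∀ j, ∃ k ∈ B j, 0 < a k}) :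
    ∃ P : Polynomial ℚ, P.degree = ((μ - 1 : ℕ) : WithBot ℕ) ∧
      ∀ n : ℕ, (c n : ℚ) = P.eval (n : ℚ) := by
  have hsum' : ∑ j, #(B j) < Fintype.card (Fin μ) := by rwa [Fintype.card_fin]
  refine ⟨hittingPoly B, ?_, fun n => ?_⟩
  · simpa using degree_hittingPoly B hB hsum'
  · rw [hc, eval_hittingPoly B hsum']

/-- With pairwise disjoint nonempty blocks `B_1, …, B_i ⊆ Fin μ` of sizes `l_j`
satisfying `∑_j l_j < μ`, and `c n` the number of `a : Fin μ → ℕ` with `∑ a = n` hitting each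
block positively, there is a polynomial `P ∈ ℚ[X]` of degree exactly `μ − 1` with
`c n = P(n)` for every `n ≥ 0`. -/
theorem stmt_7 (μ : ℕ) (hμ : 1 ≤ μ) (i : ℕ) (B : Fin i → Finset (Fin μ))
    (hB : ∀ j, (B j).Nonempty)
    (hdisj : ∀ j j', j ≠ j' → Disjoint (B j) (B j'))
    (hsum : (∑ j, (B j).card) < μ)
    (c : ℕ → ℕ)
    (hc : ∀ n, c n =
      Nat.card {a : Fin μ → ℕ // (∑ k, a k) = n ∧ ∀ j, ∃ k ∈ B j, 0 < a k}) :
    ∃ P : Polynomial ℚ, P.degree = ((μ - 1 : ℕ) : WithBot ℕ) ∧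
      ∀ n : ℕ, (c n : ℚ) = P.eval (n : ℚ) :=
  stmt_7_general μ i B hB hsum c hc
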